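/- arXiv:0904.2634 — 2 statements merged into one kernel-verified Lean document; each statement's English description precedes it below -/
import Mathlib

section
/- Let p, q, s be vectors in R^n with all entries positive, where p is nondecreasing and q is nonincreasing. If the vector s/p (componentwise) is nonincreasing and non-constant, then ‖p‖²·(qᵀs) − (pᵀq)·(pᵀs) ≥ 0, with strict inequality if p is strictly increasing. -/
/-!
Put `w = p²`, `a = q / p`, `b = s / p`. Then `‖p‖²·(qᵀs) − (pᵀq)(pᵀs)` is the Chebyshev defect
`(∑ w)(∑ w a b) − (∑ w a)(∑ w b)`, which equals `½ ∑ᵢⱼ wᵢ wⱼ (aⱼ − aᵢ)(bⱼ − bᵢ)`. Both `a` and `b`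
are antitone, so every summand is nonnegative. If `p` is strictly increasing then `a` is injective,
so a pair `i, j` with `bᵢ ≠ bⱼ` also has `aᵢ ≠ aⱼ` and contributes a positive summand.
-/

open Finset

section WeightedChebyshev

variable {ι R : Type*} [Fintype ι]

theorem sum_sum_mul_mul_sub_mul_sub [CommRing R] (w a b : ι → R) :
    ∑ i, ∑ j, w i * w j * ((a j - a i) * (b j - b i)) =
      2 * ((∑ i, w i) * ∑ i, w i * a i * b i - (∑ i, w i * a i) * ∑ i, w i * b i) := by
  set f : ι → ι → R := fun i j => w i * (w j * a j * b j) - w i * a i * (w j * b j)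
  calc ∑ i, ∑ j, w i * w j * ((a j - a i) * (b j - b i))
      = ∑ i, ∑ j, (f i j + f j i) := by
        refine sum_congr rfl fun i _ => sum_congr rfl fun j _ => ?_
        ring
    _ = ∑ i, ∑ j, f i j + ∑ j, ∑ i, f i j := by simp only [sum_add_distrib]
    _ = 2 * ∑ i, ∑ j, f i j := by rw [sum_comm (f := fun j i => f i j)]; ring
    _ = _ := by simp only [f, sum_mul_sum, mul_sub, sum_sub_distrib]

variable [CommRing R] [LinearOrder R] [IsStrictOrderedRing R] {w a b : ι → R}

theorem Monovary.weighted_sum_mul_sum_le (hw : ∀ i, 0 ≤ w i) (hab : Monovary a b) :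
    (∑ i, w i * a i) * (∑ i, w i * b i) ≤ (∑ i, w i) * ∑ i, w i * a i * b i := by
  have hsum : 0 ≤ ∑ i, ∑ j, w i * w j * ((a j - a i) * (b j - b i)) :=
    sum_nonneg fun i _ => sum_nonneg fun j _ =>
      mul_nonneg (mul_nonneg (hw i) (hw j)) (hab.sub_mul_sub_nonneg i j)
  rw [sum_sum_mul_mul_sub_mul_sub] at hsum
  linarith

theorem Monovary.weighted_sum_mul_sum_lt (hw : ∀ i, 0 < w i) (hab : Monovary a b) {i j : ι}
    (ha : a i ≠ a j) (hb : b i ≠ b j) :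
    (∑ i, w i * a i) * (∑ i, w i * b i) < (∑ i, w i) * ∑ i, w i * a i * b i := by
  have hterm : ∀ k l, 0 ≤ w k * w l * ((a l - a k) * (b l - b k)) := fun k l =>
    mul_nonneg (mul_nonneg (hw k).le (hw l).le) (hab.sub_mul_sub_nonneg k l)
  have hij : 0 < w i * w j * ((a j - a i) * (b j - b i)) :=
    mul_pos (mul_pos (hw i) (hw j)) <| (hab.sub_mul_sub_nonneg i j).lt_of_ne <|
      (mul_ne_zero (sub_ne_zero.2 ha.symm) (sub_ne_zero.2 hb.symm)).symm
  have hsum : 0 < ∑ i, ∑ j, w i * w j * ((a j - a i) * (b j - b i)) :=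
    sum_pos' (fun k _ => sum_nonneg fun l _ => hterm k l)
      ⟨i, mem_univ i, sum_pos' (fun l _ => hterm i l) ⟨j, mem_univ j, hij⟩⟩
  rw [sum_sum_mul_mul_sub_mul_sub] at hsum
  linarith

end WeightedChebyshev

section Ratios

variable {ι R : Type*} [Field R]

theorem sum_sq_mul_sum_mul_sub_eq_of_div [Fintype ι] {p : ι → R} (hp : ∀ i, p i ≠ 0)
    (x y : ι → R) :
    (∑ i, p i ^ 2) * (∑ i, x i * y i) - (∑ i, p i * x i) * (∑ i, p i * y i) =
      (∑ i, p i ^ 2) * (∑ i, p i ^ 2 * (x / p) i * (y / p) i) -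
        (∑ i, p i ^ 2 * (x / p) i) * ∑ i, p i ^ 2 * (y / p) i := by
  have hw : ∀ (z : ι → R) i, p i ^ 2 * (z / p) i = p i * z i := fun z i => by
    rw [Pi.div_apply]; field_simp [hp i]
  have hwxy : ∀ i, p i ^ 2 * (x / p) i * (y / p) i = x i * y i := fun i => by
    rw [Pi.div_apply, Pi.div_apply]; field_simp [hp i]
  simp only [hwxy]
  simp only [hw]

variable [LinearOrder R] [IsStrictOrderedRing R] [Preorder ι] {f g : ι → R}

theorem Antitone.div_of_monotone (hf : Antitone f) (hg : Monotone g) (hf0 : ∀ i, 0 ≤ f i)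
    (hg0 : ∀ i, 0 < g i) : Antitone (f / g) := fun i _ hij =>
  div_le_div₀ (hf0 i) (hf hij) (hg0 i) (hg hij)

theorem Antitone.div_of_strictMono (hf : Antitone f) (hg : StrictMono g) (hf0 : ∀ i, 0 < f i)
    (hg0 : ∀ i, 0 < g i) : StrictAnti (f / g) := fun i _ hij =>
  div_lt_div₀' (hf hij.le) (hg hij) (hf0 i) (hg0 i)

end Ratios

theorem lemma2_item4_general (n : ℕ) (p q s : Fin n → ℝ)
    (hp : ∀ i, 0 < p i) (hq : ∀ i, 0 < q i)
    (hpm : Monotone p) (hqm : Antitone q)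
    (hsp_anti : Antitone fun i => s i / p i)
    (hsp_nonconst : ∃ i j, s i / p i ≠ s j / p j) :
    (∑ i, p i ^ 2) * (∑ i, q i * s i) - (∑ i, p i * q i) * (∑ i, p i * s i) ≥ 0 ∧
      (StrictMono p →
        (∑ i, p i ^ 2) * (∑ i, q i * s i) - (∑ i, p i * q i) * (∑ i, p i * s i) > 0) := by
  have hmono : Monovary (q / p) (s / p) :=
    (hqm.div_of_monotone hpm (fun i => (hq i).le) hp).monovary hsp_anti
  rw [sum_sq_mul_sum_mul_sub_eq_of_div fun i => (hp i).ne']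
  refine ⟨sub_nonneg.2 (hmono.weighted_sum_mul_sum_le fun i => sq_nonneg (p i)),
    fun hps => sub_pos.2 ?_⟩
  obtain ⟨i, j, hsij⟩ := hsp_nonconst
  have hqij : (q / p) i ≠ (q / p) j :=
    (hqm.div_of_strictMono hps hq hp).injective.ne fun hij => hsij (hij ▸ rfl)
  exact hmono.weighted_sum_mul_sum_lt (fun i => pow_pos (hp i) 2) hqij hsij

theorem lemma2_item4 (n : ℕ) (p q s : Fin n → ℝ)
    (hp : ∀ i, 0 < p i) (hq : ∀ i, 0 < q i) (hs : ∀ i, 0 < s i)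
    (hpm : Monotone p) (hqm : Antitone q)
    (hsp_anti : Antitone fun i => s i / p i)
    (hsp_nonconst : ∃ i j, s i / p i ≠ s j / p j) :
    (∑ i, p i ^ 2) * (∑ i, q i * s i) - (∑ i, p i * q i) * (∑ i, p i * s i) ≥ 0 ∧
      (StrictMono p →
        (∑ i, p i ^ 2) * (∑ i, q i * s i) - (∑ i, p i * q i) * (∑ i, p i * s i) > 0) :=
  lemma2_item4_general n p q s hp hq hpm hqm hsp_anti hsp_nonconst
end

section
/- Let p, q, r, s ∈ R^n have positive entries, with p strictly increasing and q nonincreasing (p not proportional to q), and suppose p·x* − s = r. If (x̂, b̂) minimizes ‖p·x − b·q − r‖², then b̂ = (‖p‖²(qᵀs) − (pᵀq)(pᵀs)) / (‖p‖²‖q‖² − (pᵀq)²); hence b̂ > 0 if s/p is non-constant nonincreasing, b̂ < 0 if s/p is non-constant nondecreasing, and b̂ = 0 if s/p is constant. -/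
/-!
With weights `w = p²` and the ratios `u = q / p`, `t = s / p`, the normal equations of the
least-squares problem (after eliminating `r = p x* - s`) say that `b̂` is the weighted regression
slope of `t` on `u`: `b̂ · Cov_w(u, u) = Cov_w(u, t)`, where
`2 Cov_w(f, g) = ∑ᵢ ∑ⱼ wᵢ wⱼ (fᵢ - fⱼ)(gᵢ - gⱼ)`.
Since `p` and `q` are not proportional, `u` is not constant and `Cov_w(u, u) > 0`. Moreover `u`
is strictly decreasing, so by Chebyshev's argument `Cov_w(u, t)` is positive when `t` is a
non-constant decreasing function, negative when it is a non-constant increasing one, and zero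
when `t` is constant.
-/

open Finset

variable {ι : Type*}

lemma strictAnti_div_of_antitone_of_strictMono [Preorder ι] {p q : ι → ℝ}
    (hp : ∀ i, 0 < p i) (hq : ∀ i, 0 < q i) (hpm : StrictMono p) (hqm : Antitone q) :
    StrictAnti fun i => q i / p i := fun i j hij =>
  calc q j / p j < q j / p i := div_lt_div_of_pos_left (hq j) (hp i) (hpm hij)
    _ ≤ q i / p i := div_le_div_of_nonneg_right (hqm hij.le) (hp i).le

lemma exists_div_ne_div_of_not_proportional {p q : ι → ℝ} (hp : ∀ i, p i ≠ 0)
    (hq : ∀ i, q i ≠ 0) (h : ¬ ∃ c : ℝ, ∀ i, p i = c * q i) :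
    ∃ i j, q i / p i ≠ q j / p j := by
  by_contra! hconst
  apply h
  rcases isEmpty_or_nonempty ι with _ | ⟨⟨j⟩⟩
  · exact ⟨0, isEmptyElim⟩
  · refine ⟨p j / q j, fun i => ?_⟩
    have hij := hconst i j
    field_simp [hp i, hp j, hq i, hq j] at hij ⊢
    linarith

variable [Fintype ι]

/-- The `w`-weighted covariance of `f` and `g`, scaled by `(∑ i, w i) ^ 2`. -/
def weightedCov (w f g : ι → ℝ) : ℝ :=
  (∑ i, w i) * (∑ i, w i * f i * g i) - (∑ i, w i * f i) * (∑ i, w i * g i)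

lemma two_mul_weightedCov (w f g : ι → ℝ) :
    2 * weightedCov w f g = ∑ i, ∑ j, w i * w j * ((f i - f j) * (g i - g j)) := by
  have hcov : weightedCov w f g =
      ∑ i, ∑ j, (w i * (w j * f j * g j) - w i * f i * (w j * g j)) := by
    simp only [weightedCov, sum_mul_sum, ← sum_sub_distrib]
  calc 2 * weightedCov w f g
      = ∑ i, ∑ j, (w i * (w j * f j * g j) - w i * f i * (w j * g j))
        + ∑ j, ∑ i, (w i * (w j * f j * g j) - w i * f i * (w j * g j)) := by
        rw [two_mul, ← hcov, sum_comm, ← hcov]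
    _ = ∑ i, ∑ j, w i * w j * ((f i - f j) * (g i - g j)) := by
        simp only [← sum_add_distrib]
        exact sum_congr rfl fun i _ => sum_congr rfl fun j _ => by ring

lemma weightedCov_neg_right (w f g : ι → ℝ) :
    weightedCov w f (fun i => -g i) = -weightedCov w f g := by
  simp only [weightedCov, mul_neg, sum_neg_distrib]
  ring

lemma weightedCov_const_right (w f : ι → ℝ) (c : ℝ) : weightedCov w f (fun _ => c) = 0 := by
  simp only [weightedCov, ← sum_mul]
  ring

lemma weightedCov_pos {w f g : ι → ℝ} (hw : ∀ i, 0 < w i) (hfg : Monovary f g)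
    (hpos : ∃ i j, 0 < (f i - f j) * (g i - g j)) : 0 < weightedCov w f g := by
  obtain ⟨i, j, hij⟩ := hpos
  have hterm : ∀ i j, 0 ≤ w i * w j * ((f i - f j) * (g i - g j)) := fun i j =>
    mul_nonneg (mul_pos (hw i) (hw j)).le (hfg.sub_mul_sub_nonneg j i)
  have hsum : 0 < ∑ i, ∑ j, w i * w j * ((f i - f j) * (g i - g j)) :=
    sum_pos' (fun i _ => sum_nonneg fun j _ => hterm i j)
      ⟨i, mem_univ i, sum_pos' (fun j _ => hterm i j)
        ⟨j, mem_univ j, mul_pos (mul_pos (hw i) (hw j)) hij⟩⟩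
  linarith [two_mul_weightedCov w f g]

lemma weightedCov_self_pos {w f : ι → ℝ} (hw : ∀ i, 0 < w i) (hf : ∃ i j, f i ≠ f j) :
    0 < weightedCov w f f := by
  obtain ⟨i, j, hij⟩ := hf
  exact weightedCov_pos hw (monovary_self f) ⟨i, j, mul_self_pos.2 (sub_ne_zero.2 hij)⟩

lemma weightedCov_pos_of_strictAnti_of_antitone [LinearOrder ι] {w f g : ι → ℝ}
    (hw : ∀ i, 0 < w i) (hf : StrictAnti f) (hg : Antitone g) (hg' : ∃ i j, g i ≠ g j) :
    0 < weightedCov w f g := by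
  refine weightedCov_pos hw (hf.antitone.monovary hg) ?_
  obtain ⟨i, j, hij⟩ := hg'
  rcases lt_or_gt_of_ne (ne_of_apply_ne g hij) with h | h
  · exact ⟨j, i, mul_pos_of_neg_of_neg (sub_neg.2 (hf h))
      (sub_neg.2 ((hg h.le).lt_of_ne hij.symm))⟩
  · exact ⟨i, j, mul_pos_of_neg_of_neg (sub_neg.2 (hf h)) (sub_neg.2 ((hg h.le).lt_of_ne hij))⟩

lemma weightedCov_sq_div_div (p a b : ι → ℝ) (hp : ∀ i, p i ≠ 0) :
    weightedCov (fun i => p i ^ 2) (fun i => a i / p i) (fun i => b i / p i) =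
      (∑ i, p i ^ 2) * (∑ i, a i * b i) - (∑ i, p i * a i) * (∑ i, p i * b i) := by
  have hab : ∀ i, p i * a i * (b i / p i) = a i * b i := fun i => by
    field_simp [hp i]
  have ha : ∀ i, p i ^ 2 * (a i / p i) = p i * a i := fun i => by field_simp [hp i]
  have hb : ∀ i, p i ^ 2 * (b i / p i) = p i * b i := fun i => by field_simp [hp i]
  simp only [weightedCov, ha, hb, hab]

lemma weightedCov_sq_div_self (p q : ι → ℝ) (hp : ∀ i, p i ≠ 0) :
    weightedCov (fun i => p i ^ 2) (fun i => q i / p i) (fun i => q i / p i) =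
      (∑ i, p i ^ 2) * (∑ i, q i ^ 2) - (∑ i, p i * q i) ^ 2 := by
  simp only [weightedCov_sq_div_div p q q hp, ← sq]

lemma sum_mul_eq_zero_of_forall_sum_sq_le (u v : ι → ℝ)
    (h : ∀ ε : ℝ, ∑ i, u i ^ 2 ≤ ∑ i, (u i + ε * v i) ^ 2) : ∑ i, u i * v i = 0 := by
  have hquad : ∀ ε : ℝ, 0 ≤ (∑ i, v i ^ 2) * (ε * ε) + (2 * ∑ i, u i * v i) * ε + 0 := by
    intro ε
    have hexpand : ∑ i, (u i + ε * v i) ^ 2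
        = ∑ i, u i ^ 2 + ((∑ i, v i ^ 2) * (ε * ε) + (2 * ∑ i, u i * v i) * ε) := by
      simp only [sum_mul, mul_sum, ← sum_add_distrib]
      exact sum_congr rfl fun i _ => by ring
    linarith [h ε]
  have hdisc := discrim_le_zero hquad
  rw [discrim] at hdisc
  nlinarith [sq_nonneg (∑ i, u i * v i)]

lemma leastSquares_normal_eq (p q r s : ι → ℝ) (xstar : ℝ)
    (hexact : ∀ i, p i * xstar - s i = r i) (xh bh : ℝ)
    (hmin : ∀ x b : ℝ,
      ∑ i, (xh * p i - bh * q i - r i) ^ 2 ≤ ∑ i, (x * p i - b * q i - r i) ^ 2) :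
    bh * ((∑ i, p i ^ 2) * (∑ i, q i ^ 2) - (∑ i, p i * q i) ^ 2) =
      (∑ i, p i ^ 2) * (∑ i, q i * s i) - (∑ i, p i * q i) * (∑ i, p i * s i) := by
  set e : ι → ℝ := fun i => xh * p i - bh * q i - r i
  have he_p : ∑ i, e i * p i = 0 := sum_mul_eq_zero_of_forall_sum_sq_le e p fun ε => by
    convert hmin (xh + ε) bh using 3 with i; ring
  have he_q : ∑ i, e i * q i = 0 := sum_mul_eq_zero_of_forall_sum_sq_le e q fun ε => by
    convert hmin xh (bh - ε) using 3 with i; ring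
  have hsum : ∀ v : ι → ℝ, ∑ i, e i * v i =
      (xh - xstar) * ∑ i, p i * v i - bh * ∑ i, q i * v i + ∑ i, s i * v i := fun v => by
    simp only [mul_sum, ← sum_sub_distrib, ← sum_add_distrib]
    exact sum_congr rfl fun i _ => by simp only [e, ← hexact i]; ring
  rw [hsum] at he_p he_q
  simp only [mul_comm (s _), mul_comm (q _) (p _), ← sq] at he_p he_q
  linear_combination (∑ i, p i * q i) * he_p - (∑ i, p i ^ 2) * he_q

theorem lemma3_item3_general (n : ℕ) (p q r s : Fin n → ℝ)
    (hp : ∀ i, 0 < p i) (hq : ∀ i, 0 < q i)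
    (hpm : StrictMono p) (hqm : Antitone q)
    (hnotprop : ¬ ∃ c : ℝ, ∀ i, p i = c * q i)
    (xstar : ℝ) (hexact : ∀ i, p i * xstar - s i = r i)
    (xh bh : ℝ)
    (hmin : ∀ x b : ℝ,
      ∑ i, (xh * p i - bh * q i - r i) ^ 2 ≤ ∑ i, (x * p i - b * q i - r i) ^ 2) :
    bh = ((∑ i, p i ^ 2) * (∑ i, q i * s i) - (∑ i, p i * q i) * (∑ i, p i * s i)) /
        ((∑ i, p i ^ 2) * (∑ i, q i ^ 2) - (∑ i, p i * q i) ^ 2) ∧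
      ((Antitone (fun i => s i / p i) ∧ (∃ i j, s i / p i ≠ s j / p j)) → bh > 0) ∧
      ((Monotone (fun i => s i / p i) ∧ (∃ i j, s i / p i ≠ s j / p j)) → bh < 0) ∧
      ((∃ c : ℝ, ∀ i, s i / p i = c) → bh = 0) := by
  have hp0 : ∀ i, p i ≠ 0 := fun i => (hp i).ne'
  have hw : ∀ i, 0 < p i ^ 2 := fun i => pow_pos (hp i) 2
  have hu := strictAnti_div_of_antitone_of_strictMono hp hq hpm hqm
  have hvar := weightedCov_self_pos hw
    (exists_div_ne_div_of_not_proportional hp0 (fun i => (hq i).ne') hnotprop)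
  have hD := weightedCov_sq_div_self p q hp0
  have hN := weightedCov_sq_div_div p q s hp0
  have hbh := eq_div_of_mul_eq hvar.ne'
    (hD ▸ hN ▸ leastSquares_normal_eq p q r s xstar hexact xh bh hmin)
  refine ⟨hN ▸ hD ▸ hbh, fun ⟨ht, ht'⟩ => ?_, fun ⟨ht, ht'⟩ => ?_, fun ⟨c, hc⟩ => ?_⟩
  · exact hbh ▸ div_pos (weightedCov_pos_of_strictAnti_of_antitone hw hu ht ht') hvar
  · have hneg := weightedCov_pos_of_strictAnti_of_antitone hw hu ht.neg
      (by simpa only [ne_eq, neg_inj] using ht')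
    rw [weightedCov_neg_right] at hneg
    exact hbh ▸ div_neg_of_neg_of_pos (neg_pos.1 hneg) hvar
  · rw [hbh, funext hc, weightedCov_const_right, zero_div]

theorem lemma3_item3 (n : ℕ) (p q r s : Fin n → ℝ)
    (hp : ∀ i, 0 < p i) (hq : ∀ i, 0 < q i) (hr : ∀ i, 0 < r i) (hs : ∀ i, 0 < s i)
    (hpm : StrictMono p) (hqm : Antitone q)
    (hnotprop : ¬ ∃ c : ℝ, ∀ i, p i = c * q i)
    (xstar : ℝ) (hexact : ∀ i, p i * xstar - s i = r i)
    (xh bh : ℝ)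
    (hmin : ∀ x b : ℝ,
      ∑ i, (xh * p i - bh * q i - r i) ^ 2 ≤ ∑ i, (x * p i - b * q i - r i) ^ 2) :
    bh = ((∑ i, p i ^ 2) * (∑ i, q i * s i) - (∑ i, p i * q i) * (∑ i, p i * s i)) /
        ((∑ i, p i ^ 2) * (∑ i, q i ^ 2) - (∑ i, p i * q i) ^ 2) ∧
      ((Antitone (fun i => s i / p i) ∧ (∃ i j, s i / p i ≠ s j / p j)) → bh > 0) ∧
      ((Monotone (fun i => s i / p i) ∧ (∃ i j, s i / p i ≠ s j / p j)) → bh < 0) ∧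
      ((∃ c : ℝ, ∀ i, s i / p i = c) → bh = 0) :=
  lemma3_item3_general n p q r s hp hq hpm hqm hnotprop xstar hexact xh bh hmin
end
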